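/- arXiv:2011.14516 — 4 statements merged into one kernel-verified Lean document; each statement's English description precedes it below -/
import Mathlib

section
/- Let K^{(i-1)} and K^{(i)} = -(R + DᵀP^{(i)}D)⁻¹(BᵀP^{(i)} + DᵀP^{(i)}C + S) be given, where P^{(i)} ∈ 𝒮^n_{++} satisfies the Lyapunov recursion (A+BK^{(i-1)})ᵀP^{(i)} + P^{(i)}(A+BK^{(i-1)}) + (C+DK^{(i-1)})ᵀP^{(i)}(C+DK^{(i-1)}) + K^{(i-1)ᵀ}RK^{(i-1)} + SᵀK^{(i-1)} + K^{(i-1)ᵀ}S + Q = 0, with R ∈ 𝒮^m_{++} and Q - SᵀR⁻¹S ∈ 𝒮^n_{++}. Then (A+BK^{(i)})ᵀP^{(i)} + P^{(i)}(A+BK^{(i)}) + (C+DK^{(i)})ᵀP^{(i)}(C+DK^{(i)}) is negative definite. -/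
open Matrix

/-- Stepwise stability: if P⁽ⁱ⁾ ∈ 𝒮^n_{++} solves the Lyapunov recursion with
gain K⁽ⁱ⁻¹⁾, and K⁽ⁱ⁾ is the updated gain, then
(A+BK⁽ⁱ⁾)ᵀP⁽ⁱ⁾ + P⁽ⁱ⁾(A+BK⁽ⁱ⁾) + (C+DK⁽ⁱ⁾)ᵀP⁽ⁱ⁾(C+DK⁽ⁱ⁾) is negative
definite. -/
theorem stmt_6 {m n : ℕ}
    (A C : Matrix (Fin n) (Fin n) ℝ) (B D : Matrix (Fin n) (Fin m) ℝ)
    (Q Pi : Matrix (Fin n) (Fin n) ℝ) (R : Matrix (Fin m) (Fin m) ℝ)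
    (S : Matrix (Fin m) (Fin n) ℝ)
    (hR : R.PosDef) (hQ : Q.IsSymm) (hQS : (Q - Sᵀ * R⁻¹ * S).PosDef)
    (hPi : Pi.PosDef)
    (Kprev Ki : Matrix (Fin m) (Fin n) ℝ)
    (hKi : Ki = -((R + Dᵀ * Pi * D)⁻¹ * (Bᵀ * Pi + Dᵀ * Pi * C + S)))
    (hLyap : (A + B * Kprev)ᵀ * Pi + Pi * (A + B * Kprev)
        + (C + D * Kprev)ᵀ * Pi * (C + D * Kprev)
        + Kprevᵀ * R * Kprev + Sᵀ * Kprev + Kprevᵀ * S + Q = 0) :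
    (-((A + B * Ki)ᵀ * Pi + Pi * (A + B * Ki)
        + (C + D * Ki)ᵀ * Pi * (C + D * Ki))).PosDef := by
  have hPt : Piᵀ = Pi := by
    have h := hPi.isHermitian.eq
    rwa [conjTranspose_eq_transpose_of_trivial] at h
  have hRt : Rᵀ = R := by
    have h := hR.isHermitian.eq
    rwa [conjTranspose_eq_transpose_of_trivial] at h
  have hRdet : IsUnit R.det := hR.det_pos.ne'.isUnit
  have hRit : (R⁻¹)ᵀ = R⁻¹ := by rw [transpose_nonsing_inv, hRt]
  have hDPD : (Dᵀ * Pi * D).PosSemidef := by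
    have h := hPi.posSemidef.conjTranspose_mul_mul_same D
    rwa [conjTranspose_eq_transpose_of_trivial] at h
  have hM : (R + Dᵀ * Pi * D).PosDef := hR.add_posSemidef hDPD
  have hMdet : IsUnit (R + Dᵀ * Pi * D).det := hM.det_pos.ne'.isUnit
  have hz2 : (R + Dᵀ * Pi * D) * Ki + (Bᵀ * Pi + Dᵀ * Pi * C + S) = 0 := by
    rw [hKi, Matrix.mul_neg, ← Matrix.mul_assoc, Matrix.mul_nonsing_inv _ hMdet,
      Matrix.one_mul, neg_add_cancel]
  have hz3 : Kiᵀ * (R + Dᵀ * Pi * D) + (Pi * B + Cᵀ * Pi * D + Sᵀ) = 0 := by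
    have h := congrArg Matrix.transpose hz2
    simp only [transpose_add, transpose_mul, transpose_transpose, transpose_zero,
      hPt, hRt] at h
    calc Kiᵀ * (R + Dᵀ * Pi * D) + (Pi * B + Cᵀ * Pi * D + Sᵀ)
        = Kiᵀ * (R + Dᵀ * (Pi * D)) + (Pi * B + Cᵀ * (Pi * D) + Sᵀ) := by
          simp only [Matrix.mul_assoc]
      _ = 0 := h
  have hz6 : R * R⁻¹ - 1 = 0 := by
    rw [Matrix.mul_nonsing_inv _ hRdet, sub_self]
  have hz7 : R⁻¹ * R - 1 = 0 := by
    rw [Matrix.nonsing_inv_mul _ hRdet, sub_self]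
  have hzL : Aᵀ * Pi + Pi * A + Cᵀ * Pi * C + Kprevᵀ * Bᵀ * Pi + Pi * B * Kprev
      + Cᵀ * Pi * D * Kprev + Kprevᵀ * Dᵀ * Pi * C + Kprevᵀ * Dᵀ * Pi * D * Kprev
      + Kprevᵀ * R * Kprev + Sᵀ * Kprev + Kprevᵀ * S + Q = 0 := by
    rw [← hLyap]
    simp only [transpose_add, transpose_mul, Matrix.add_mul, Matrix.mul_add,
      Matrix.mul_assoc]
    abel
  have key : -((A + B * Ki)ᵀ * Pi + Pi * (A + B * Ki)
        + (C + D * Ki)ᵀ * Pi * (C + D * Ki))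
      = (Kprev - Ki)ᵀ * (R + Dᵀ * Pi * D) * (Kprev - Ki)
        + (Ki + R⁻¹ * S)ᵀ * R * (Ki + R⁻¹ * S) + (Q - Sᵀ * R⁻¹ * S) := by
    rw [← sub_eq_zero]
    have comb : -((A + B * Ki)ᵀ * Pi + Pi * (A + B * Ki)
          + (C + D * Ki)ᵀ * Pi * (C + D * Ki))
        - ((Kprev - Ki)ᵀ * (R + Dᵀ * Pi * D) * (Kprev - Ki)
          + (Ki + R⁻¹ * S)ᵀ * R * (Ki + R⁻¹ * S) + (Q - Sᵀ * R⁻¹ * S))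
        = -(Aᵀ * Pi + Pi * A + Cᵀ * Pi * C + Kprevᵀ * Bᵀ * Pi + Pi * B * Kprev
            + Cᵀ * Pi * D * Kprev + Kprevᵀ * Dᵀ * Pi * C + Kprevᵀ * Dᵀ * Pi * D * Kprev
            + Kprevᵀ * R * Kprev + Sᵀ * Kprev + Kprevᵀ * S + Q)
          + (Kprevᵀ - Kiᵀ) * ((R + Dᵀ * Pi * D) * Ki + (Bᵀ * Pi + Dᵀ * Pi * C + S))
          + (Kiᵀ * (R + Dᵀ * Pi * D) + (Pi * B + Cᵀ * Pi * D + Sᵀ)) * Kprev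
          - (Kiᵀ * (R + Dᵀ * Pi * D) + (Pi * B + Cᵀ * Pi * D + Sᵀ)) * Ki
          - Kiᵀ * (R * R⁻¹ - 1) * S
          - Sᵀ * (R⁻¹ * R - 1) * Ki
          - Sᵀ * ((R⁻¹ * R - 1) * (R⁻¹ * S)) := by
      simp only [transpose_add, transpose_sub, transpose_mul, hPt, hRt, hRit,
        Matrix.add_mul, Matrix.mul_add, Matrix.sub_mul, Matrix.mul_sub,
        Matrix.neg_mul, Matrix.mul_neg, Matrix.one_mul, Matrix.mul_one,
        Matrix.mul_assoc]
      abel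
    rw [comb, hzL, hz2, hz3, hz6, hz7]
    simp
  rw [key]
  have h1 : ((Kprev - Ki)ᵀ * (R + Dᵀ * Pi * D) * (Kprev - Ki)).PosSemidef := by
    have h := hM.posSemidef.conjTranspose_mul_mul_same (Kprev - Ki)
    rwa [conjTranspose_eq_transpose_of_trivial] at h
  have h2 : ((Ki + R⁻¹ * S)ᵀ * R * (Ki + R⁻¹ * S)).PosSemidef := by
    have h := hR.posSemidef.conjTranspose_mul_mul_same (Ki + R⁻¹ * S)
    rwa [conjTranspose_eq_transpose_of_trivial] at h
  exact Matrix.PosDef.posSemidef_add (h1.add h2) hQS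
end

section
/- With the notation of the policy iteration: suppose P^{(i)} solves the Lyapunov recursion with gain K^{(i-1)}, P^{(i+1)} solves the Lyapunov recursion with gain K^{(i)}, and K^{(i)} = -(R + DᵀP^{(i)}D)⁻¹(BᵀP^{(i)} + DᵀP^{(i)}C + S). Set ΔP = P^{(i)} - P^{(i+1)} and ΔK = K^{(i-1)} - K^{(i)}. Then ΔP satisfies the Lyapunov equation (A+BK^{(i)})ᵀΔP + ΔP(A+BK^{(i)}) + (C+DK^{(i)})ᵀΔP(C+DK^{(i)}) + ΔKᵀ(R + DᵀP^{(i)}D)ΔK = 0. -/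
open Matrix

/-- The difference ΔP = P⁽ⁱ⁾ - P⁽ⁱ⁺¹⁾ of successive policy iterates satisfies
the Lyapunov equation with source ΔKᵀ(R + DᵀP⁽ⁱ⁾D)ΔK, ΔK = K⁽ⁱ⁻¹⁾ - K⁽ⁱ⁾. -/
theorem stmt_7 {m n : ℕ}
    (A C : Matrix (Fin n) (Fin n) ℝ) (B D : Matrix (Fin n) (Fin m) ℝ)
    (Q Pi Pnext : Matrix (Fin n) (Fin n) ℝ) (R : Matrix (Fin m) (Fin m) ℝ)
    (S : Matrix (Fin m) (Fin n) ℝ)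
    (hR : R.IsSymm) (hQ : Q.IsSymm) (hPi : Pi.IsSymm) (hPnext : Pnext.IsSymm)
    (hInv : IsUnit (R + Dᵀ * Pi * D))
    (Kprev Ki : Matrix (Fin m) (Fin n) ℝ)
    (hKi : Ki = -((R + Dᵀ * Pi * D)⁻¹ * (Bᵀ * Pi + Dᵀ * Pi * C + S)))
    (hLyapPrev : (A + B * Kprev)ᵀ * Pi + Pi * (A + B * Kprev)
        + (C + D * Kprev)ᵀ * Pi * (C + D * Kprev)
        + Kprevᵀ * R * Kprev + Sᵀ * Kprev + Kprevᵀ * S + Q = 0)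
    (hLyapNext : (A + B * Ki)ᵀ * Pnext + Pnext * (A + B * Ki)
        + (C + D * Ki)ᵀ * Pnext * (C + D * Ki)
        + Kiᵀ * R * Ki + Sᵀ * Ki + Kiᵀ * S + Q = 0) :
    (A + B * Ki)ᵀ * (Pi - Pnext) + (Pi - Pnext) * (A + B * Ki)
      + (C + D * Ki)ᵀ * (Pi - Pnext) * (C + D * Ki)
      + (Kprev - Ki)ᵀ * (R + Dᵀ * Pi * D) * (Kprev - Ki) = 0 := by
  have hGKi : (R + Dᵀ * Pi * D) * Ki = -(Bᵀ * Pi + Dᵀ * Pi * C + S) := by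
    rw [hKi, Matrix.mul_neg, ← Matrix.mul_assoc,
      Matrix.mul_nonsing_inv _ ((Matrix.isUnit_iff_isUnit_det _).mp hInv), Matrix.one_mul]
  have h1 : Bᵀ * Pi + Dᵀ * Pi * C + S = -((R + Dᵀ * Pi * D) * Ki) := by
    rw [hGKi, neg_neg]
  have h2 : Pi * B + Cᵀ * Pi * D + Sᵀ = -(Kiᵀ * (R + Dᵀ * Pi * D)) := by
    have := congrArg Matrix.transpose h1
    simpa [Matrix.transpose_add, Matrix.transpose_mul, Matrix.transpose_neg,
      hR.eq, hPi.eq, Matrix.mul_assoc] using this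
  have key : (A + B * Ki)ᵀ * (Pi - Pnext) + (Pi - Pnext) * (A + B * Ki)
      + (C + D * Ki)ᵀ * (Pi - Pnext) * (C + D * Ki)
      + (Kprev - Ki)ᵀ * (R + Dᵀ * Pi * D) * (Kprev - Ki)
      = ((A + B * Kprev)ᵀ * Pi + Pi * (A + B * Kprev)
        + (C + D * Kprev)ᵀ * Pi * (C + D * Kprev)
        + Kprevᵀ * R * Kprev + Sᵀ * Kprev + Kprevᵀ * S + Q)
      - ((A + B * Ki)ᵀ * Pnext + Pnext * (A + B * Ki)
        + (C + D * Ki)ᵀ * Pnext * (C + D * Ki)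
        + Kiᵀ * R * Ki + Sᵀ * Ki + Kiᵀ * S + Q)
      + ((Ki - Kprev)ᵀ * (Bᵀ * Pi + Dᵀ * Pi * C + S)
        + (Pi * B + Cᵀ * Pi * D + Sᵀ) * (Ki - Kprev)
        + Kiᵀ * (R + Dᵀ * Pi * D) * Ki - Kprevᵀ * (R + Dᵀ * Pi * D) * Kprev
        + (Kprev - Ki)ᵀ * (R + Dᵀ * Pi * D) * (Kprev - Ki)) := by
    simp only [Matrix.transpose_add, Matrix.transpose_mul, Matrix.transpose_sub,
      Matrix.add_mul, Matrix.mul_add, Matrix.sub_mul, Matrix.mul_sub,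
      Matrix.neg_mul, Matrix.mul_neg, Matrix.mul_assoc]
    abel
  rw [key, hLyapPrev, hLyapNext, h1, h2]
  simp only [Matrix.transpose_sub, Matrix.transpose_mul,
    Matrix.add_mul, Matrix.mul_add, Matrix.sub_mul, Matrix.mul_sub,
    Matrix.neg_mul, Matrix.mul_neg, Matrix.mul_assoc]
  abel
end

section
/- Let S ∈ ℝ^{m×n}, R ∈ 𝒮^m_{++}, P ∈ 𝒮^n_{++}, D ∈ ℝ^{n×m}, and K = -(R+DᵀPD)⁻¹(BᵀP + DᵀPC + S). Then KᵀRK + SᵀK + KᵀS + Q is symmetric, and if Q - SᵀR⁻¹S > 0 then it is positive definite; consequently if additionally (A+BK)ᵀP' + P'(A+BK) + (C+DK)ᵀP'(C+DK) + KᵀRK + SᵀK + KᵀS + Q = 0 for some P' ∈ 𝒮^n, then (A+BK)ᵀP' + P'(A+BK) + (C+DK)ᵀP'(C+DK) is negative definite. -/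
open Matrix

/-- With the Riccati gain K: KᵀRK + SᵀK + KᵀS + Q is symmetric; if
Q - SᵀR⁻¹S > 0 it is positive definite; consequently, if additionally P'
solves the Lyapunov equation with gain K, then
(A+BK)ᵀP' + P'(A+BK) + (C+DK)ᵀP'(C+DK) is negative definite. -/
theorem stmt_13 {m n : ℕ}
    (A C : Matrix (Fin n) (Fin n) ℝ) (B D : Matrix (Fin n) (Fin m) ℝ)
    (Q P : Matrix (Fin n) (Fin n) ℝ) (R : Matrix (Fin m) (Fin m) ℝ)
    (S : Matrix (Fin m) (Fin n) ℝ)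
    (hR : R.PosDef) (hP : P.PosDef) (hQ : Q.IsSymm)
    (K : Matrix (Fin m) (Fin n) ℝ)
    (hK : K = -((R + Dᵀ * P * D)⁻¹ * (Bᵀ * P + Dᵀ * P * C + S))) :
    (Kᵀ * R * K + Sᵀ * K + Kᵀ * S + Q).IsSymm
    ∧ ((Q - Sᵀ * R⁻¹ * S).PosDef →
        (Kᵀ * R * K + Sᵀ * K + Kᵀ * S + Q).PosDef
        ∧ ∀ P' : Matrix (Fin n) (Fin n) ℝ, P'.IsSymm →
            (A + B * K)ᵀ * P' + P' * (A + B * K)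
              + (C + D * K)ᵀ * P' * (C + D * K)
              + Kᵀ * R * K + Sᵀ * K + Kᵀ * S + Q = 0 →
            (-((A + B * K)ᵀ * P' + P' * (A + B * K)
                + (C + D * K)ᵀ * P' * (C + D * K))).PosDef) := by
  have hRsymm : Rᵀ = R := hR.isHermitian
  have hQeq : Qᵀ = Q := hQ
  have hdet : IsUnit R.det := hR.det_pos.ne'.isUnit
  have h1 : ∀ X : Matrix (Fin m) (Fin n) ℝ, R * (R⁻¹ * X) = X := by
    intro X; rw [← Matrix.mul_assoc, mul_nonsing_inv R hdet, Matrix.one_mul]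
  have h2 : ∀ X : Matrix (Fin m) (Fin n) ℝ, R⁻¹ * (R * X) = X := by
    intro X; rw [← Matrix.mul_assoc, nonsing_inv_mul R hdet, Matrix.one_mul]
  have hRinvT : (R⁻¹)ᵀ = R⁻¹ := by rw [transpose_nonsing_inv, hRsymm]
  have hdecomp : Kᵀ * R * K + Sᵀ * K + Kᵀ * S + Q
      = (K + R⁻¹ * S)ᵀ * R * (K + R⁻¹ * S) + (Q - Sᵀ * R⁻¹ * S) := by
    rw [transpose_add, transpose_mul, hRinvT]
    simp only [Matrix.add_mul, Matrix.mul_add, Matrix.mul_assoc, h1, h2]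
    abel
  have hsymm : (Kᵀ * R * K + Sᵀ * K + Kᵀ * S + Q).IsSymm := by
    unfold Matrix.IsSymm
    simp only [transpose_add, transpose_mul, transpose_transpose, hRsymm, hQeq,
      Matrix.mul_assoc]
    abel
  refine ⟨hsymm, fun hQS => ?_⟩
  have hM : (Kᵀ * R * K + Sᵀ * K + Kᵀ * S + Q).PosDef := by
    rw [hdecomp]
    refine Matrix.PosDef.posSemidef_add ?_ hQS
    have := hR.posSemidef.conjTranspose_mul_mul_same (K + R⁻¹ * S)
    simpa using this
  refine ⟨hM, fun P' _ hEq => ?_⟩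
  have hEq' : ((A + B * K)ᵀ * P' + P' * (A + B * K)
      + (C + D * K)ᵀ * P' * (C + D * K))
      + (Kᵀ * R * K + Sᵀ * K + Kᵀ * S + Q) = 0 := by
    rw [← hEq]; abel
  have hneg := neg_eq_of_add_eq_zero_left hEq'
  rw [← hneg, neg_neg]
  exact hM
end

section
/- Let P ∈ 𝒮^n satisfy the SARE AᵀP + PA + CᵀPC + Q = (PB + CᵀPD + Sᵀ)(R + DᵀPD)⁻¹(BᵀP + DᵀPC + S) with R + DᵀPD positive definite, and let K = -(R + DᵀPD)⁻¹(BᵀP + DᵀPC + S). Then for every K' ∈ ℝ^{m×n}: (A+BK')ᵀP + P(A+BK') + (C+DK')ᵀP(C+DK') + K'ᵀRK' + SᵀK' + K'ᵀS + Q = (K'-K)ᵀ(R+DᵀPD)(K'-K) ≥ 0, i.e., the Lyapunov expression at any gain K' is positive semidefinite, vanishing exactly at K' = K. -/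
open Matrix

/-!
Completion of squares. Writing `G = R + DᵀPD` and `M = BᵀP + DᵀPC + S`, the Lyapunov expression
at a gain `K'` expands (using `Pᵀ = P`) to `(AᵀP + PA + CᵀPC + Q) + K'ᵀM + MᵀK' + K'ᵀGK'`. The SARE
says the bracket equals `MᵀG⁻¹M`, and since `K = -G⁻¹M` the whole sum is the square
`(K' - K)ᵀG(K' - K)`. Its positivity and the equality case follow from `G` being positive definite.
-/

namespace Matrix

variable {m n R : Type*} [Fintype m]

lemma PosDef.conjTranspose_mul_mul_same_eq_zero_iff [Fintype n] [Ring R] [PartialOrder R]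
    [StarRing R] {A : Matrix n n R} (hA : A.PosDef) {B : Matrix n m R} :
    Bᴴ * A * B = 0 ↔ B = 0 := by
  refine ⟨fun h ↦ ext_iff_mulVec.mpr fun v ↦ ?_, fun h ↦ by simp [h]⟩
  have hquad : star (B *ᵥ v) ⬝ᵥ A *ᵥ (B *ᵥ v) = star v ⬝ᵥ (Bᴴ * A * B) *ᵥ v := by
    simp only [star_mulVec, dotProduct_mulVec, vecMul_vecMul, Matrix.mul_assoc]
  by_contra hv
  rw [zero_mulVec] at hv
  exact (hA.dotProduct_mulVec_pos hv).ne' (by rw [hquad, h, zero_mulVec, dotProduct_zero])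

lemma transpose_mul_mul_complete_square [CommRing R] [DecidableEq m] {G : Matrix m m R}
    (hG : Gᵀ = G) (hdet : IsUnit G.det) (X M : Matrix m n R) :
    (X + G⁻¹ * M)ᵀ * G * (X + G⁻¹ * M) = Xᵀ * G * X + Xᵀ * M + Mᵀ * X + Mᵀ * G⁻¹ * M := by
  have hGinv : (G⁻¹)ᵀ = G⁻¹ := by rw [transpose_nonsing_inv, hG]
  simp only [transpose_add, transpose_mul, hGinv, Matrix.add_mul, Matrix.mul_add,
    Matrix.mul_assoc, mul_nonsing_inv_cancel_left G _ hdet, nonsing_inv_mul_cancel_left G _ hdet]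
  abel

end Matrix

lemma lyapunov_expression_eq {m n R : Type*} [Fintype m] [Fintype n] [CommRing R]
    (A C Q P : Matrix n n R) (B D : Matrix n m R) (R₀ : Matrix m m R) (S K : Matrix m n R)
    (hP : Pᵀ = P) :
    (A + B * K)ᵀ * P + P * (A + B * K) + (C + D * K)ᵀ * P * (C + D * K)
        + Kᵀ * R₀ * K + Sᵀ * K + Kᵀ * S + Q
      = (Aᵀ * P + P * A + Cᵀ * P * C + Q) + Kᵀ * (Bᵀ * P + Dᵀ * P * C + S)
        + (Bᵀ * P + Dᵀ * P * C + S)ᵀ * K + Kᵀ * (R₀ + Dᵀ * P * D) * K := by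
  simp only [transpose_add, transpose_mul, transpose_transpose, hP, Matrix.add_mul, Matrix.mul_add,
    Matrix.mul_assoc]
  abel

theorem stmt_14_general {m n : ℕ}
    (A C : Matrix (Fin n) (Fin n) ℝ) (B D : Matrix (Fin n) (Fin m) ℝ)
    (Q P : Matrix (Fin n) (Fin n) ℝ) (R : Matrix (Fin m) (Fin m) ℝ)
    (S : Matrix (Fin m) (Fin n) ℝ)
    (hP : P.IsSymm) (hRD : (R + Dᵀ * P * D).PosDef)
    (hSARE : Aᵀ * P + P * A + Cᵀ * P * C + Q
      = (P * B + Cᵀ * P * D + Sᵀ) * (R + Dᵀ * P * D)⁻¹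
          * (Bᵀ * P + Dᵀ * P * C + S))
    (K : Matrix (Fin m) (Fin n) ℝ)
    (hK : K = -((R + Dᵀ * P * D)⁻¹ * (Bᵀ * P + Dᵀ * P * C + S))) :
    ∀ K' : Matrix (Fin m) (Fin n) ℝ,
      ((A + B * K')ᵀ * P + P * (A + B * K')
          + (C + D * K')ᵀ * P * (C + D * K')
          + K'ᵀ * R * K' + Sᵀ * K' + K'ᵀ * S + Q
        = (K' - K)ᵀ * (R + Dᵀ * P * D) * (K' - K))
      ∧ ((K' - K)ᵀ * (R + Dᵀ * P * D) * (K' - K)).PosSemidef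
      ∧ ((K' - K)ᵀ * (R + Dᵀ * P * D) * (K' - K) = 0 ↔ K' = K) := by
  intro K'
  set G := R + Dᵀ * P * D
  set M := Bᵀ * P + Dᵀ * P * C + S
  have hG : Gᵀ = G := by simpa [conjTranspose_eq_transpose_of_trivial] using hRD.isHermitian.eq
  have hMT : Mᵀ = P * B + Cᵀ * P * D + Sᵀ := by
    simp only [M, transpose_add, transpose_mul, transpose_transpose, hP.eq, Matrix.mul_assoc]
  have hsquare : (K' - K)ᵀ * G * (K' - K) = K'ᵀ * G * K' + K'ᵀ * M + Mᵀ * K' + Mᵀ * G⁻¹ * M := by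
    rw [hK, sub_neg_eq_add]
    exact transpose_mul_mul_complete_square hG ((isUnit_iff_isUnit_det G).mp hRD.isUnit) K' M
  refine ⟨?_, ?_, ?_⟩
  · rw [lyapunov_expression_eq A C Q P B D R S K' hP.eq, hsquare, hSARE, ← hMT]
    abel
  · simpa only [conjTranspose_eq_transpose_of_trivial] using
      hRD.posSemidef.conjTranspose_mul_mul_same (K' - K)
  · rw [← conjTranspose_eq_transpose_of_trivial, hRD.conjTranspose_mul_mul_same_eq_zero_iff,
      sub_eq_zero]

/-- If P solves the SARE and K is the Riccati gain, then for every K' the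
Lyapunov expression at K' equals (K'-K)ᵀ(R+DᵀPD)(K'-K), is positive
semidefinite, and vanishes exactly at K' = K. -/
theorem stmt_14 {m n : ℕ}
    (A C : Matrix (Fin n) (Fin n) ℝ) (B D : Matrix (Fin n) (Fin m) ℝ)
    (Q P : Matrix (Fin n) (Fin n) ℝ) (R : Matrix (Fin m) (Fin m) ℝ)
    (S : Matrix (Fin m) (Fin n) ℝ)
    (hP : P.IsSymm) (hQ : Q.IsSymm) (hRD : (R + Dᵀ * P * D).PosDef)
    (hSARE : Aᵀ * P + P * A + Cᵀ * P * C + Q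
      = (P * B + Cᵀ * P * D + Sᵀ) * (R + Dᵀ * P * D)⁻¹
          * (Bᵀ * P + Dᵀ * P * C + S))
    (K : Matrix (Fin m) (Fin n) ℝ)
    (hK : K = -((R + Dᵀ * P * D)⁻¹ * (Bᵀ * P + Dᵀ * P * C + S))) :
    ∀ K' : Matrix (Fin m) (Fin n) ℝ,
      ((A + B * K')ᵀ * P + P * (A + B * K')
          + (C + D * K')ᵀ * P * (C + D * K')
          + K'ᵀ * R * K' + Sᵀ * K' + K'ᵀ * S + Q
        = (K' - K)ᵀ * (R + Dᵀ * P * D) * (K' - K))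
      ∧ ((K' - K)ᵀ * (R + Dᵀ * P * D) * (K' - K)).PosSemidef
      ∧ ((K' - K)ᵀ * (R + Dᵀ * P * D) * (K' - K) = 0 ↔ K' = K) :=
  stmt_14_general A C B D Q P R S hP hRD hSARE K hK
end
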